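/- arXiv:quant-ph/0509041 — 7 statements merged into one kernel-verified Lean document; each statement's English description precedes it below -/
import Mathlib

section
/- For every nonzero vector v ∈ ℝ³, the linear span of the set { T : T is a real symmetric positive semidefinite 3×3 matrix and vᵀ T v = 0 } is a 3-dimensional subspace of the space of real symmetric 3×3 matrices. (Lemma 2: the span of the intersection of the boundary of the positive semidefinite cone with one of its tangent spaces is 3-dimensional.) -/
/-!
A positive semidefinite `T` with `vᵀ T v = 0` satisfies `T v = 0`. Conversely, a symmetric `T`
with `T v = 0` is the difference `T⁺ - T⁻` of its positive and negative parts, and both kill `v`: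
since `T⁺ T⁻ = 0` we get `T⁺ᴴ T⁺ = T⁺ T`, which kills `v`, hence so does `T⁺`.
So the span is the space of symmetric matrices annihilating `v`, i.e. the kernel of `T ↦ T v` on
symmetric matrices. For `v ≠ 0` this map is onto, so rank–nullity gives the dimension
`n(n+1)/2 - n = n(n-1)/2`, which is `3` for `n = 3`.
-/

open Matrix

namespace Matrix

variable (R n : Type*)

def symmetricSubmodule [Semiring R] : Submodule R (Matrix n n R) where
  carrier := {T | T.IsSymm}
  add_mem' := IsSymm.add
  zero_mem' := isSymm_zero
  smul_mem' c _ h := h.smul c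

def symmetricSubmoduleEquivSym2 [Semiring R] : symmetricSubmodule R n ≃ₗ[R] (Sym2 n → R) where
  toFun T := Sym2.lift ⟨fun i j => T.1 i j, fun i j => T.2.apply j i⟩
  invFun f := ⟨of fun i j => f s(i, j), IsSymm.ext fun i j => by simp [Sym2.eq_swap]⟩
  map_add' _ _ := by ext ⟨i, j⟩; simp
  map_smul' _ _ := by ext ⟨i, j⟩; simp
  left_inv _ := by ext; simp
  right_inv _ := by ext ⟨i, j⟩; simp

theorem finrank_symmetricSubmodule [Ring R] [StrongRankCondition R] [Fintype n] :
    Module.finrank R (symmetricSubmodule R n) = (Fintype.card n + 1).choose 2 := by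
  rw [(symmetricSubmoduleEquivSym2 R n).finrank_eq, Module.finrank_fintype_fun_eq_card, Sym2.card]

variable {R n}

def symmetricKer [CommSemiring R] [Fintype n] (v : n → R) : Submodule R (Matrix n n R) where
  carrier := {T | T.IsSymm ∧ T *ᵥ v = 0}
  add_mem' ha hb := ⟨ha.1.add hb.1, by rw [add_mulVec, ha.2, hb.2, add_zero]⟩
  zero_mem' := ⟨isSymm_zero, zero_mulVec v⟩
  smul_mem' c _ h := ⟨h.1.smul c, by rw [smul_mulVec, h.2, smul_zero]⟩

def symmetricMulVec [CommSemiring R] [Fintype n] (v : n → R) :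
    symmetricSubmodule R n →ₗ[R] (n → R) where
  toFun T := T.1 *ᵥ v
  map_add' _ _ := add_mulVec _ _ _
  map_smul' _ _ := smul_mulVec _ _ _

theorem map_ker_symmetricMulVec [CommSemiring R] [Fintype n] (v : n → R) :
    (LinearMap.ker (symmetricMulVec v)).map (symmetricSubmodule R n).subtype = symmetricKer v := by
  ext T
  constructor
  · rintro ⟨S, hS, rfl⟩
    exact ⟨S.2, hS⟩
  · rintro ⟨hT, hTv⟩
    exact ⟨⟨T, hT⟩, hTv, rfl⟩

theorem symmetricMulVec_surjective {K : Type*} [Field K] [LinearOrder K] [IsStrictOrderedRing K]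
    [Fintype n] {v : n → K} (hv : v ≠ 0) :
    Function.Surjective (symmetricMulVec v) := by
  intro w
  set c := (v ⬝ᵥ v)⁻¹
  have hc : c * (v ⬝ᵥ v) = 1 := inv_mul_cancel₀ (mt dotProduct_self_eq_zero.mp hv)
  refine ⟨⟨c • (vecMulVec w v + vecMulVec v w) - (c ^ 2 * (w ⬝ᵥ v)) • vecMulVec v v, ?_⟩, ?_⟩
  · refine IsSymm.ext fun i j => ?_
    simp [vecMulVec, mul_comm, add_comm]
  · ext i
    simp only [symmetricMulVec, LinearMap.coe_mk, AddHom.coe_mk, sub_mulVec, add_mulVec,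
      smul_mulVec, vecMulVec_mulVec, op_smul_eq_smul, Pi.sub_apply, Pi.add_apply, Pi.smul_apply,
      smul_eq_mul]
    linear_combination (w i - c * (w ⬝ᵥ v) * v i) * hc

theorem finrank_symmetricKer {K : Type*} [Field K] [LinearOrder K] [IsStrictOrderedRing K]
    [Fintype n] {v : n → K} (hv : v ≠ 0) :
    Module.finrank K (symmetricKer v) = (Fintype.card n).choose 2 := by
  have h := LinearMap.finrank_range_add_finrank_ker (symmetricMulVec v)
  rw [LinearMap.range_eq_top.mpr (symmetricMulVec_surjective hv), finrank_top,
    Module.finrank_fintype_fun_eq_card, finrank_symmetricSubmodule, Nat.choose_succ_succ',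
    Nat.choose_one_right] at h
  rw [← map_ker_symmetricMulVec,
    ← (Submodule.equivMapOfInjective _ (Submodule.injective_subtype _) _).finrank_eq]
  exact Nat.add_left_cancel h

open scoped MatrixOrder

theorem posPart_mulVec_eq_zero [Fintype n] [DecidableEq n] {T : Matrix n n ℝ}
    (hT : IsSelfAdjoint T) {v : n → ℝ} (hTv : T *ᵥ v = 0) : T⁺ *ᵥ v = 0 := by
  have hPT : (T⁺)ᴴ * T⁺ = T⁺ * T := calc
    (T⁺)ᴴ * T⁺ = T⁺ * T⁺ := by rw [(CFC.posPart_nonneg T).posSemidef.isHermitian.eq]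
    _ = T⁺ * (T⁺ - T⁻) := by rw [mul_sub, CFC.posPart_mul_negPart, sub_zero]
    _ = T⁺ * T := by rw [CFC.posPart_sub_negPart T]
  rw [← conjTranspose_mul_self_mulVec_eq_zero, hPT, ← mulVec_mulVec, hTv, mulVec_zero]

theorem IsSymm.exists_posSemidef_sub_of_mulVec_eq_zero [Fintype n] [DecidableEq n]
    {T : Matrix n n ℝ} (hT : T.IsSymm) {v : n → ℝ} (hTv : T *ᵥ v = 0) :
    ∃ P N : Matrix n n ℝ, P.PosSemidef ∧ N.PosSemidef ∧ P *ᵥ v = 0 ∧ N *ᵥ v = 0 ∧ T = P - N := by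
  have hT' : IsSelfAdjoint T := (isHermitian_iff_isSymm.mpr hT).isSelfAdjoint
  refine ⟨T⁺, T⁻, (CFC.posPart_nonneg T).posSemidef, (CFC.negPart_nonneg T).posSemidef,
    posPart_mulVec_eq_zero hT' hTv, ?_, (CFC.posPart_sub_negPart T).symm⟩
  rw [← CFC.posPart_neg]
  exact posPart_mulVec_eq_zero hT'.neg (by rw [neg_mulVec, hTv, neg_zero])

theorem span_setOf_posSemidef_dotProduct_mulVec_eq_zero [Fintype n] [DecidableEq n]
    (v : n → ℝ) :
    Submodule.span ℝ {T : Matrix n n ℝ | T.IsSymm ∧ T.PosSemidef ∧ v ⬝ᵥ T *ᵥ v = 0} =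
      symmetricKer v := by
  apply le_antisymm
  · rw [Submodule.span_le]
    rintro T ⟨hT, hTpsd, hTv⟩
    exact ⟨hT, (hTpsd.dotProduct_mulVec_zero_iff v).mp (by simpa using hTv)⟩
  · rintro T ⟨hT, hTv⟩
    obtain ⟨P, N, hP, hN, hPv, hNv, rfl⟩ := hT.exists_posSemidef_sub_of_mulVec_eq_zero hTv
    have mem {S : Matrix n n ℝ} (hS : S.PosSemidef) (hSv : S *ᵥ v = 0) :
        S ∈ Submodule.span ℝ {T : Matrix n n ℝ | T.IsSymm ∧ T.PosSemidef ∧ v ⬝ᵥ T *ᵥ v = 0} :=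
      Submodule.subset_span
        ⟨isHermitian_iff_isSymm.mp hS.isHermitian, hS, by rw [hSv, dotProduct_zero]⟩
    exact sub_mem (mem hP hPv) (mem hN hNv)

end Matrix

/-- Lemma 2: for every nonzero `v ∈ ℝ³`, the span of the set of real symmetric positive
semidefinite 3×3 matrices `T` with `vᵀ T v = 0` (the intersection of the boundary of the
positive semidefinite cone with the corresponding tangent space) is 3-dimensional. -/
theorem stmt_9 (v : Fin 3 → ℝ) (hv : v ≠ 0) :
    Module.finrank ℝ (Submodule.span ℝ
      {T : Matrix (Fin 3) (Fin 3) ℝ | T.IsSymm ∧ T.PosSemidef ∧ v ⬝ᵥ T.mulVec v = 0}) = 3 := by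
  rw [span_setOf_posSemidef_dotProduct_mulVec_eq_zero, finrank_symmetricKer hv]
  rfl
end

section
/- Let C be a real symmetric 3×3 matrix such that D = 2((Tr C)·I₃ − C) is positive semidefinite and singular, and let v be a nonzero vector with Dv = 0. Then there exist orthonormal vectors w₁, w₂, both orthogonal to v, with w₁ᵀ C w₁ = 0 and w₂ᵀ C w₂ = 0; moreover, if there exists a vector u orthogonal to v with Cu ≠ 0, then w₁, w₂ can be chosen so that additionally w₁ᵀ C w₂ ≠ 0. (This establishes the conditions of Theorem 1 for a dynamics lying on the boundary of the positivity cone.) -/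
/-!
Since `D v = 0` says `C v = (Tr C) v`, the symmetric matrix `C` preserves `v⊥`, and its
restriction there has trace `Tr C - Tr C = 0`. In an orthonormal basis `e₁, e₂` of `v⊥` it is
`[[α, β], [β, -α]]`, so its quadratic form takes the values `α` and `-α` at `e₁` and `e₂` and,
by the intermediate value theorem, vanishes at some unit vector `w₁`; it then also vanishes at
the unit vector `w₂ ⊥ w₁` of `v⊥`, and `(w₁ᵀ C w₂)² = α² + β²`, which is nonzero unless `C`
kills `v⊥`.
-/

open Matrix Real Set

namespace Matrix

variable {ι R : Type*} [Fintype ι]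

theorem IsSymm.dotProduct_mulVec_comm [CommSemiring R] {C : Matrix ι ι R} (hC : C.IsSymm)
    (x y : ι → R) : x ⬝ᵥ C *ᵥ y = y ⬝ᵥ C *ᵥ x := by
  rw [dotProduct_mulVec, ← hC.eq, vecMul_transpose, dotProduct_comm, hC.eq]

section OrthonormalRows

variable [DecidableEq ι] [CommRing R] {P : Matrix ι ι R}

theorem dotProduct_row_row_of_mul_transpose_eq_one (hP : P * Pᵀ = 1) (i j : ι) :
    P i ⬝ᵥ P j = (1 : Matrix ι ι R) i j := by
  rw [← hP]; rfl

theorem trace_eq_sum_dotProduct_mulVec_row (hP : P * Pᵀ = 1) (C : Matrix ι ι R) :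
    C.trace = ∑ i, P i ⬝ᵥ C *ᵥ P i := by
  calc C.trace = (P * C * Pᵀ).trace := by
        rw [trace_mul_cycle, mul_eq_one_comm.mp hP, one_mul]
    _ = ∑ i, P i ⬝ᵥ C *ᵥ P i := by
        simp only [trace, diag, mul_apply', dotProduct_mulVec]
        rfl

theorem sum_dotProduct_smul_row (hP : P * Pᵀ = 1) (x : ι → R) :
    ∑ i, (P i ⬝ᵥ x) • P i = x := by
  calc ∑ i, (P i ⬝ᵥ x) • P i = Pᵀ *ᵥ (P *ᵥ x) := by
        rw [mulVec_transpose, vecMul_eq_sum]; rfl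
    _ = x := by rw [mulVec_mulVec, mul_eq_one_comm.mp hP, one_mulVec]

end OrthonormalRows

theorem exists_mul_transpose_eq_one_row_eq_smul [DecidableEq ι] {v : ι → ℝ} (hv : v ≠ 0)
    (i₀ : ι) : ∃ P : Matrix ι ι ℝ, P * Pᵀ = 1 ∧ ∃ c : ℝ, c ≠ 0 ∧ P i₀ = c • v := by
  let x : EuclideanSpace ℝ ι := WithLp.toLp 2 v
  have hx : x ≠ 0 := by simpa [x] using hv
  have horth : Orthonormal ℝ (({i₀} : Set ι).domRestrict fun _ => ‖x‖⁻¹ • x) :=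
    orthonormal_subsingleton_iff.mpr fun _ => norm_smul_inv_norm hx
  obtain ⟨b, hb⟩ :=
    Orthonormal.exists_orthonormalBasis_extension_of_card_eq finrank_euclideanSpace horth
  refine ⟨of fun i => WithLp.ofLp (b i), ?_, ‖x‖⁻¹, by simpa using hx,
    congrArg WithLp.ofLp (hb i₀ rfl)⟩
  ext i j
  have hij := orthonormal_iff_ite.mp b.orthonormal i j
  rw [EuclideanSpace.inner_eq_star_dotProduct, star_trivial, dotProduct_comm] at hij
  rw [mul_apply', one_apply]
  exact hij

end Matrix

theorem exists_unit_isotropic_traceless_binary_form (α β : ℝ) :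
    ∃ p q : ℝ, p ^ 2 + q ^ 2 = 1 ∧ α * (p ^ 2 - q ^ 2) + 2 * β * p * q = 0 := by
  set f : ℝ → ℝ := fun θ => α * (cos θ ^ 2 - sin θ ^ 2) + 2 * β * cos θ * sin θ
  have hf : ContinuousOn f (uIcc 0 (π / 2)) := by fun_prop
  have h0 : (0 : ℝ) ∈ uIcc (f 0) (f (π / 2)) := by
    simp only [f, cos_zero, sin_zero, cos_pi_div_two, sin_pi_div_two, mem_uIcc]
    rcases le_total α 0 with h | h
    · left; constructor <;> linarith
    · right; constructor <;> linarith
  obtain ⟨θ, -, hθ⟩ := intermediate_value_uIcc hf h0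
  exact ⟨cos θ, sin θ, cos_sq_add_sin_sq θ, hθ⟩

theorem exists_isotropic_orthonormal_pair {ι : Type*} [Fintype ι] {C : Matrix ι ι ℝ}
    (hC : C.IsSymm) {e₁ e₂ : ι → ℝ} (h₁ : e₁ ⬝ᵥ e₁ = 1) (h₂ : e₂ ⬝ᵥ e₂ = 1) (h₁₂ : e₁ ⬝ᵥ e₂ = 0)
    (htr : e₁ ⬝ᵥ C *ᵥ e₁ + e₂ ⬝ᵥ C *ᵥ e₂ = 0) :
    ∃ w₁ ∈ Submodule.span ℝ {e₁, e₂}, ∃ w₂ ∈ Submodule.span ℝ {e₁, e₂},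
      w₁ ⬝ᵥ w₁ = 1 ∧ w₂ ⬝ᵥ w₂ = 1 ∧ w₁ ⬝ᵥ w₂ = 0 ∧
      w₁ ⬝ᵥ C *ᵥ w₁ = 0 ∧ w₂ ⬝ᵥ C *ᵥ w₂ = 0 ∧
      (w₁ ⬝ᵥ C *ᵥ w₂) ^ 2 = (e₁ ⬝ᵥ C *ᵥ e₁) ^ 2 + (e₁ ⬝ᵥ C *ᵥ e₂) ^ 2 := by
  set α := e₁ ⬝ᵥ C *ᵥ e₁
  set β := e₁ ⬝ᵥ C *ᵥ e₂
  obtain ⟨p, q, hpq, hiso⟩ := exists_unit_isotropic_traceless_binary_form α β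
  have h₂₁ : e₂ ⬝ᵥ e₁ = 0 := by rwa [dotProduct_comm]
  have hβ : e₂ ⬝ᵥ C *ᵥ e₁ = β := hC.dotProduct_mulVec_comm _ _
  have hγ : e₂ ⬝ᵥ C *ᵥ e₂ = -α := by linear_combination htr
  refine ⟨p • e₁ + q • e₂, Submodule.mem_span_pair.mpr ⟨p, q, rfl⟩,
    (-q) • e₁ + p • e₂, Submodule.mem_span_pair.mpr ⟨-q, p, rfl⟩, ?_⟩
  simp only [mulVec_add, mulVec_smul, dotProduct_add, add_dotProduct, dotProduct_smul,
    smul_dotProduct, smul_eq_mul, h₁, h₂, h₁₂, h₂₁, hβ, hγ]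
  refine ⟨by linear_combination hpq, by linear_combination hpq, by ring,
    by linear_combination hiso, by linear_combination -hiso, ?_⟩
  -- `(α (p² - q²) + 2β pq)² + (β (p² - q²) - 2α pq)² = (α² + β²) (p² + q²)²`
  linear_combination (α ^ 2 + β ^ 2) * (p ^ 2 + q ^ 2 + 1) * hpq
    - (α * (p ^ 2 - q ^ 2) + 2 * β * p * q) * hiso

section TraceEigenvector

variable {C P : Matrix (Fin 3) (Fin 3) ℝ}

theorem dotProduct_mulVec_row_one_add_row_two_eq_zero (hP : P * Pᵀ = 1)
    (h₀ : C *ᵥ P 0 = C.trace • P 0) : P 1 ⬝ᵥ C *ᵥ P 1 + P 2 ⬝ᵥ C *ᵥ P 2 = 0 := by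
  have htr := trace_eq_sum_dotProduct_mulVec_row hP C
  rw [Fin.sum_univ_three, h₀, dotProduct_smul, dotProduct_row_row_of_mul_transpose_eq_one hP,
    one_apply_eq, smul_eq_mul, mul_one] at htr
  linarith

theorem mulVec_eq_zero_of_dotProduct_row_zero_eq_zero (hC : C.IsSymm) (hP : P * Pᵀ = 1)
    (h₀ : C *ᵥ P 0 = C.trace • P 0) (h₁₁ : P 1 ⬝ᵥ C *ᵥ P 1 = 0) (h₁₂ : P 1 ⬝ᵥ C *ᵥ P 2 = 0)
    {u : Fin 3 → ℝ} (hu : P 0 ⬝ᵥ u = 0) : C *ᵥ u = 0 := by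
  have h₂₂ : P 2 ⬝ᵥ C *ᵥ P 2 = 0 := by
    linear_combination dotProduct_mulVec_row_one_add_row_two_eq_zero hP h₀ - h₁₁
  have h₂₁ : P 2 ⬝ᵥ C *ᵥ P 1 = 0 := by rw [hC.dotProduct_mulVec_comm, h₁₂]
  have hcol : ∀ j, j ≠ 0 → C *ᵥ P j = 0 := by
    intro j hj
    have h₀ⱼ : P 0 ⬝ᵥ C *ᵥ P j = 0 := by
      rw [hC.dotProduct_mulVec_comm, h₀, dotProduct_smul,
        dotProduct_row_row_of_mul_transpose_eq_one hP, one_apply_ne hj, smul_zero]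
    rw [← sum_dotProduct_smul_row hP (C *ᵥ P j), Fin.sum_univ_three, h₀ⱼ]
    fin_cases j
    · exact absurd rfl hj
    · simp [h₁₁, h₂₁]
    · simp [h₁₂, h₂₂]
  rw [← sum_dotProduct_smul_row hP u, mulVec_sum, Fin.sum_univ_three, hu]
  simp [mulVec_smul, hcol]

theorem exists_isotropic_orthonormal_pair_orthogonal_row_zero (hC : C.IsSymm)
    (hP : P * Pᵀ = 1) (h₀ : C *ᵥ P 0 = C.trace • P 0) :
    ∃ w₁ w₂ : Fin 3 → ℝ, w₁ ⬝ᵥ w₁ = 1 ∧ w₂ ⬝ᵥ w₂ = 1 ∧ w₁ ⬝ᵥ w₂ = 0 ∧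
      P 0 ⬝ᵥ w₁ = 0 ∧ P 0 ⬝ᵥ w₂ = 0 ∧ w₁ ⬝ᵥ C *ᵥ w₁ = 0 ∧ w₂ ⬝ᵥ C *ᵥ w₂ = 0 ∧
      (w₁ ⬝ᵥ C *ᵥ w₂ = 0 → ∀ u, P 0 ⬝ᵥ u = 0 → C *ᵥ u = 0) := by
  have hrow := dotProduct_row_row_of_mul_transpose_eq_one hP
  obtain ⟨w₁, hw₁, w₂, hw₂, h₁, h₂, h₁₂, hq₁, hq₂, hcross⟩ :=
    exists_isotropic_orthonormal_pair hC (by simp [hrow]) (by simp [hrow]) (by simp [hrow])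
      (dotProduct_mulVec_row_one_add_row_two_eq_zero hP h₀)
  have horth : ∀ w ∈ Submodule.span ℝ {P 1, P 2}, P 0 ⬝ᵥ w = 0 := by
    intro w hw
    obtain ⟨a, b, rfl⟩ := Submodule.mem_span_pair.mp hw
    simp [hrow]
  refine ⟨w₁, w₂, h₁, h₂, h₁₂, horth w₁ hw₁, horth w₂ hw₂, hq₁, hq₂, fun h u hu => ?_⟩
  rw [h, zero_pow two_ne_zero, eq_comm, add_eq_zero_iff_of_nonneg (sq_nonneg _) (sq_nonneg _),
    sq_eq_zero_iff, sq_eq_zero_iff] at hcross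
  exact mulVec_eq_zero_of_dotProduct_row_zero_eq_zero hC hP h₀ hcross.1 hcross.2 hu

end TraceEigenvector

theorem stmt_12_general (C : Matrix (Fin 3) (Fin 3) ℝ) (hC : C.IsSymm)
    (v : Fin 3 → ℝ) (hv : v ≠ 0)
    (hker : (2 • (C.trace • (1 : Matrix (Fin 3) (Fin 3) ℝ) - C)).mulVec v = 0) :
    (∃ w₁ w₂ : Fin 3 → ℝ, w₁ ⬝ᵥ w₁ = 1 ∧ w₂ ⬝ᵥ w₂ = 1 ∧ w₁ ⬝ᵥ w₂ = 0 ∧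
      v ⬝ᵥ w₁ = 0 ∧ v ⬝ᵥ w₂ = 0 ∧
      w₁ ⬝ᵥ C.mulVec w₁ = 0 ∧ w₂ ⬝ᵥ C.mulVec w₂ = 0) ∧
    ((∃ u : Fin 3 → ℝ, v ⬝ᵥ u = 0 ∧ C.mulVec u ≠ 0) →
      ∃ w₁ w₂ : Fin 3 → ℝ, w₁ ⬝ᵥ w₁ = 1 ∧ w₂ ⬝ᵥ w₂ = 1 ∧ w₁ ⬝ᵥ w₂ = 0 ∧
        v ⬝ᵥ w₁ = 0 ∧ v ⬝ᵥ w₂ = 0 ∧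
        w₁ ⬝ᵥ C.mulVec w₁ = 0 ∧ w₂ ⬝ᵥ C.mulVec w₂ = 0 ∧
        w₁ ⬝ᵥ C.mulVec w₂ ≠ 0) := by
  have hCv : C *ᵥ v = C.trace • v := by
    rw [smul_mulVec, sub_mulVec, smul_mulVec, one_mulVec, smul_eq_zero, sub_eq_zero] at hker
    exact (hker.resolve_left two_ne_zero).symm
  obtain ⟨P, hP, c, hc, hP₀⟩ := exists_mul_transpose_eq_one_row_eq_smul hv 0
  have h₀ : C *ᵥ P 0 = C.trace • P 0 := by rw [hP₀, mulVec_smul, hCv, smul_comm]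
  have hperp : ∀ w, P 0 ⬝ᵥ w = 0 ↔ v ⬝ᵥ w = 0 := by simp [hP₀, hc]
  obtain ⟨w₁, w₂, h₁, h₂, h₁₂, hv₁, hv₂, hq₁, hq₂, hkill⟩ :=
    exists_isotropic_orthonormal_pair_orthogonal_row_zero hC hP h₀
  rw [hperp] at hv₁ hv₂
  refine ⟨⟨w₁, w₂, h₁, h₂, h₁₂, hv₁, hv₂, hq₁, hq₂⟩, ?_⟩
  rintro ⟨u, hu, hCu⟩
  exact ⟨w₁, w₂, h₁, h₂, h₁₂, hv₁, hv₂, hq₁, hq₂, fun h => hCu (hkill h u ((hperp u).mpr hu))⟩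

/-- If the dissipative matrix `D = 2((Tr C)·I₃ − C)` is positive semidefinite and singular,
with `Dv = 0` for a nonzero `v`, then there are orthonormal vectors `w₁, w₂ ⊥ v` with
`w₁ᵀ C w₁ = w₂ᵀ C w₂ = 0`; and if moreover some `u ⊥ v` has `Cu ≠ 0`, the pair can be
chosen with `w₁ᵀ C w₂ ≠ 0` (the conditions of Theorem 1 hold on the boundary of the
positivity cone). -/
theorem stmt_12 (C : Matrix (Fin 3) (Fin 3) ℝ) (hC : C.IsSymm)
    (hD : (2 • (C.trace • (1 : Matrix (Fin 3) (Fin 3) ℝ) - C)).PosSemidef)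
    (v : Fin 3 → ℝ) (hv : v ≠ 0)
    (hker : (2 • (C.trace • (1 : Matrix (Fin 3) (Fin 3) ℝ) - C)).mulVec v = 0) :
    (∃ w₁ w₂ : Fin 3 → ℝ, w₁ ⬝ᵥ w₁ = 1 ∧ w₂ ⬝ᵥ w₂ = 1 ∧ w₁ ⬝ᵥ w₂ = 0 ∧
      v ⬝ᵥ w₁ = 0 ∧ v ⬝ᵥ w₂ = 0 ∧
      w₁ ⬝ᵥ C.mulVec w₁ = 0 ∧ w₂ ⬝ᵥ C.mulVec w₂ = 0) ∧
    ((∃ u : Fin 3 → ℝ, v ⬝ᵥ u = 0 ∧ C.mulVec u ≠ 0) →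
      ∃ w₁ w₂ : Fin 3 → ℝ, w₁ ⬝ᵥ w₁ = 1 ∧ w₂ ⬝ᵥ w₂ = 1 ∧ w₁ ⬝ᵥ w₂ = 0 ∧
        v ⬝ᵥ w₁ = 0 ∧ v ⬝ᵥ w₂ = 0 ∧
        w₁ ⬝ᵥ C.mulVec w₁ = 0 ∧ w₂ ⬝ᵥ C.mulVec w₂ = 0 ∧
        w₁ ⬝ᵥ C.mulVec w₂ ≠ 0) :=
  stmt_12_general C hC v hv hker
end

section
/- Let h₃ and c be nonzero real numbers with c > 0, and set H = 2h₃(E₁₂ − E₂₁) and D = 2c·(E₁₁ + E₂₂ + 2E₃₃) (the completely positive dissipator with c₁₁ = c₂₂ = c, c₁₂ = c₁₃ = c₂₃ = 0). Then the Lie subalgebra of gl(3,ℝ) generated by {D, H + D} equals the 2-dimensional span of {E₂₁ − E₁₂, E₁₁ + E₂₂ + 2E₃₃}; in particular the corresponding control system is not accessible. -/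
open Matrix

attribute [local instance 100] LieRing.ofAssociativeRing

/-- `E i j` is the 3×3 real matrix with a single 1 in position `(i,j)`. -/
noncomputable def E (i j : Fin 3) : Matrix (Fin 3) (Fin 3) ℝ :=
  Matrix.single i j 1

/-!
Both generators are multiples of two fixed matrices: `D = 2c B` and `H = -2h₃ A`, with
`A = E₂₁ - E₁₂` the infinitesimal rotation in the (1,2)-plane and `B = E₁₁ + E₂₂ + 2E₃₃`.
Since `B` is scalar on that plane, `A` and `B` commute, so the span of `{A, B}` is already closed
under brackets and is the Lie algebra generated by `{D, H + D}`.
-/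

section SpanPair

variable {K V : Type*} [DivisionRing K] [AddCommGroup V] [Module K V]

theorem Submodule.span_smul_pair_smul_add {a b : K} (ha : a ≠ 0) (hb : b ≠ 0) (x y : V) :
    Submodule.span K {b • y, a • x + b • y} = Submodule.span K {x, y} := by
  apply le_antisymm <;> rw [Submodule.span_le, Set.insert_subset_iff, Set.singleton_subset_iff]
  · exact ⟨Submodule.mem_span_pair.mpr ⟨0, b, by simp⟩,
      Submodule.mem_span_pair.mpr ⟨a, b, rfl⟩⟩
  · refine ⟨Submodule.mem_span_pair.mpr ⟨-a⁻¹, a⁻¹, ?_⟩,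
      Submodule.mem_span_pair.mpr ⟨b⁻¹, 0, ?_⟩⟩
    · simp [smul_add, smul_smul, inv_mul_cancel₀ ha]
    · simp [smul_smul, inv_mul_cancel₀ hb]

theorem finrank_span_pair_of_linearIndependent {x y : V} (h : LinearIndependent K ![x, y]) :
    Module.finrank K (Submodule.span K {x, y}) = 2 := by
  rw [← Matrix.range_cons_cons_empty x y ![], finrank_span_eq_card h, Fintype.card_fin]

end SpanPair

theorem LieSubalgebra.coe_lieSpan_pair_of_commute {R A : Type*} [CommRing R] [Ring A]
    [Algebra R A] {x y : A} (h : Commute x y) :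
    (LieSubalgebra.lieSpan R A {x, y} : Submodule R A) = Submodule.span R {x, y} := by
  refine LieSubalgebra.coe_lieSpan_eq_span_of_forall_lie_eq_zero ?_
  simp only [Set.mem_insert_iff, Set.mem_singleton_iff, Ring.lie_def]
  rintro x (rfl | rfl) y (rfl | rfl) <;> simp only [sub_self, h.eq]

theorem commute_rotation_dissipator :
    Commute (E 1 0 - E 0 1) (E 0 0 + E 1 1 + 2 • E 2 2) := by
  ext i j
  fin_cases i <;> fin_cases j <;>
    simp [E, Matrix.mul_apply, Matrix.single]

theorem linearIndependent_rotation_dissipator :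
    LinearIndependent ℝ ![E 1 0 - E 0 1, E 0 0 + E 1 1 + 2 • E 2 2] := by
  rw [LinearIndependent.pair_iff]
  intro s t h
  have h₁₀ := congrFun (congrFun h 1) 0
  have h₀₀ := congrFun (congrFun h 0) 0
  simp [E, Matrix.single] at h₁₀ h₀₀
  exact ⟨h₁₀, h₀₀⟩

/-- With `H = 2h₃(E₁₂ − E₂₁)` and the completely positive dissipator
`D = 2c(E₁₁ + E₂₂ + 2E₃₃)` (`c₁₁ = c₂₂ = c > 0`), the Lie algebra generated by
`{D, H + D}` is the 2-dimensional span of `{E₂₁ − E₁₂, E₁₁ + E₂₂ + 2E₃₃}`;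
in particular the control system is not accessible. -/
theorem stmt_13 (h₃ c : ℝ) (hh : h₃ ≠ 0) (hc : c > 0) :
    let H : Matrix (Fin 3) (Fin 3) ℝ := (2 * h₃) • (E 0 1 - E 1 0)
    let D : Matrix (Fin 3) (Fin 3) ℝ := (2 * c) • (E 0 0 + E 1 1 + 2 • E 2 2)
    (LieSubalgebra.lieSpan ℝ (Matrix (Fin 3) (Fin 3) ℝ) {D, H + D} :
        Set (Matrix (Fin 3) (Fin 3) ℝ)) =
      (Submodule.span ℝ {E 1 0 - E 0 1, E 0 0 + E 1 1 + 2 • E 2 2} :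
        Submodule ℝ (Matrix (Fin 3) (Fin 3) ℝ)) ∧
    Module.finrank ℝ
      (Submodule.span ℝ ({E 1 0 - E 0 1, E 0 0 + E 1 1 + 2 • E 2 2} :
        Set (Matrix (Fin 3) (Fin 3) ℝ))) = 2 := by
  intro H D
  have hH : H = (-(2 * h₃)) • (E 1 0 - E 0 1) := by
    simp only [H, neg_smul, ← smul_neg, neg_sub]
  have hspan : Submodule.span ℝ {D, H + D} =
      Submodule.span ℝ {E 1 0 - E 0 1, E 0 0 + E 1 1 + 2 • E 2 2} := by
    rw [hH]
    exact Submodule.span_smul_pair_smul_add (by simpa using hh) (by positivity) _ _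
  have hcomm : Commute D (H + D) := by
    rw [hH]
    exact ((commute_rotation_dissipator.symm.smul_left _).smul_right _).add_right (.refl D)
  refine ⟨?_, finrank_span_pair_of_linearIndependent linearIndependent_rotation_dissipator⟩
  rw [← hspan, ← LieSubalgebra.coe_lieSpan_pair_of_commute hcomm]
  rfl
end

section
/- Let h₃ ≠ 0 and let c₁₁, c₂₂ be nonnegative real numbers with c₁₁ ≠ c₂₂. Set H = 2h₃(E₁₂ − E₂₁) and D = 2(c₂₂E₁₁ + c₁₁E₂₂ + (c₁₁ + c₂₂)E₃₃) (the completely positive dissipator with c₁₂ = c₁₃ = c₂₃ = 0). Then the Lie subalgebra of gl(3,ℝ) generated by {D, H + D} equals the 4-dimensional span of {E₁₂, E₂₁, E₁₁ − E₂₂, E₂₂ + E₃₃}; in particular the corresponding control system is not accessible. -/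
open Matrix

attribute [local instance 100] LieRing.ofAssociativeRing

/-!
Both generators lie in the Lie algebra of block matrices `[[X, 0], [0, tr X]]` with `X ∈ gl(2, ℝ)`,
which is 4-dimensional. Conversely, the generated Lie algebra contains `H`, a nonzero multiple of
`E₁₂ − E₂₁`, and `[D, H] = 4h₃(c₂₂ − c₁₁)(E₁₂ + E₂₁)`, which is nonzero since `c₁₁ ≠ c₂₂`. Hence it
contains `E₁₂`, `E₂₁` and `[E₁₂, E₂₁] = E₁₁ − E₂₂`, and finally `E₂₂ + E₃₃` from `D`, because
`c₁₁ + c₂₂ > 0`.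
-/

noncomputable def hamiltonian (h₃ : ℝ) : Matrix (Fin 3) (Fin 3) ℝ :=
  (2 * h₃) • (E 0 1 - E 1 0)

noncomputable def dissipator (c₁₁ c₂₂ : ℝ) : Matrix (Fin 3) (Fin 3) ℝ :=
  2 • (c₂₂ • E 0 0 + c₁₁ • E 1 1 + (c₁₁ + c₂₂) • E 2 2)

lemma lie_E_E_swap (i j : Fin 3) : ⁅E i j, E j i⁆ = E i i - E j j := by
  simp only [E, Ring.lie_def, single_mul_single_same, one_mul]

lemma lie_dissipator_hamiltonian (h₃ c₁₁ c₂₂ : ℝ) :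
    ⁅dissipator c₁₁ c₂₂, hamiltonian h₃⁆ = (4 * h₃ * (c₂₂ - c₁₁)) • (E 0 1 + E 1 0) := by
  ext i j
  fin_cases i <;> fin_cases j <;>
    simp [dissipator, hamiltonian, Ring.lie_def, mul_apply, E, single] <;>
    ring

lemma dissipator_eq (c₁₁ c₂₂ : ℝ) :
    dissipator c₁₁ c₂₂ =
      (2 * c₂₂) • (E 0 0 - E 1 1) + (2 * (c₁₁ + c₂₂)) • (E 1 1 + E 2 2) := by
  ext i j
  fin_cases i <;> fin_cases j <;> simp [dissipator, E, single] <;> ring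

/-- The image of `gl(2, ℝ)` under `X ↦ diag(X, tr X)`; it is closed under brackets because
commutators are traceless. -/
noncomputable def blockLieSubalgebra : LieSubalgebra ℝ (Matrix (Fin 3) (Fin 3) ℝ) where
  carrier := {M | M 0 2 = 0 ∧ M 1 2 = 0 ∧ M 2 0 = 0 ∧ M 2 1 = 0 ∧ M 2 2 = M 0 0 + M 1 1}
  add_mem' := by
    rintro A B ⟨a02, a12, a20, a21, a22⟩ ⟨b02, b12, b20, b21, b22⟩
    refine ⟨?_, ?_, ?_, ?_, ?_⟩ <;> simp only [Matrix.add_apply, *] <;> ring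
  zero_mem' := by simp
  smul_mem' := by
    rintro t A ⟨a02, a12, a20, a21, a22⟩
    refine ⟨?_, ?_, ?_, ?_, ?_⟩ <;> simp only [Matrix.smul_apply, smul_eq_mul, *] <;> ring
  lie_mem' := by
    rintro A B ⟨a02, a12, a20, a21, a22⟩ ⟨b02, b12, b20, b21, b22⟩
    refine ⟨?_, ?_, ?_, ?_, ?_⟩ <;>
      simp only [Ring.lie_def, Matrix.sub_apply, mul_apply, Fin.sum_univ_three, *] <;> ring

lemma coe_blockLieSubalgebra :
    (blockLieSubalgebra : Set (Matrix (Fin 3) (Fin 3) ℝ)) =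
      Submodule.span ℝ {E 0 1, E 1 0, E 0 0 - E 1 1, E 1 1 + E 2 2} := by
  ext M
  constructor
  · rintro ⟨m02, m12, m20, m21, m22⟩
    have hM : M = M 0 1 • E 0 1 + M 1 0 • E 1 0 + M 0 0 • (E 0 0 - E 1 1) +
        (M 0 0 + M 1 1) • (E 1 1 + E 2 2) := by
      ext i j
      fin_cases i <;> fin_cases j <;> simp [E, single, *]
    rw [hM]
    refine add_mem (add_mem (add_mem ?_ ?_) ?_) ?_ <;>
      exact Submodule.smul_mem _ _ (Submodule.subset_span (by simp))
  · intro hM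
    have hle : Submodule.span ℝ {E 0 1, E 1 0, E 0 0 - E 1 1, E 1 1 + E 2 2} ≤
        blockLieSubalgebra.toSubmodule := by
      rw [Submodule.span_le]
      rintro X (rfl | rfl | rfl | rfl) <;>
        refine ⟨?_, ?_, ?_, ?_, ?_⟩ <;> simp [E, single]
    exact hle hM

lemma hamiltonian_mem_blockLieSubalgebra (h₃ : ℝ) : hamiltonian h₃ ∈ blockLieSubalgebra := by
  refine ⟨?_, ?_, ?_, ?_, ?_⟩ <;> simp [hamiltonian, E, single]

lemma dissipator_mem_blockLieSubalgebra (c₁₁ c₂₂ : ℝ) :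
    dissipator c₁₁ c₂₂ ∈ blockLieSubalgebra := by
  refine ⟨?_, ?_, ?_, ?_, ?_⟩ <;> simp [dissipator, E, single, add_comm]

lemma linearIndependent_blockBasis :
    LinearIndependent ℝ ![E 0 1, E 1 0, E 0 0 - E 1 1, E 1 1 + E 2 2] := by
  rw [Fintype.linearIndependent_iff]
  intro g hg
  have entry (k l : Fin 3) := congrFun (congrFun hg k) l
  have h01 := entry 0 1
  have h10 := entry 1 0
  have h00 := entry 0 0
  have h22 := entry 2 2
  simp [Fin.sum_univ_four, E, single] at h01 h10 h00 h22
  intro i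
  fin_cases i <;> simp_all

lemma finrank_span_blockBasis :
    Module.finrank ℝ (Submodule.span ℝ ({E 0 1, E 1 0, E 0 0 - E 1 1, E 1 1 + E 2 2} :
      Set (Matrix (Fin 3) (Fin 3) ℝ))) = 4 := by
  have hrange : Set.range ![E 0 1, E 1 0, E 0 0 - E 1 1, E 1 1 + E 2 2] =
      {E 0 1, E 1 0, E 0 0 - E 1 1, E 1 1 + E 2 2} := by
    simp only [range_cons, range_empty, Set.union_empty, Set.singleton_union]
  rw [← hrange, finrank_span_eq_card linearIndependent_blockBasis, Fintype.card_fin]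

lemma span_blockBasis_le {h₃ c₁₁ c₂₂ : ℝ} (hh : h₃ ≠ 0) (hne : c₁₁ ≠ c₂₂)
    (hsum : c₁₁ + c₂₂ ≠ 0) {K : LieSubalgebra ℝ (Matrix (Fin 3) (Fin 3) ℝ)}
    (hD : dissipator c₁₁ c₂₂ ∈ K) (hH : hamiltonian h₃ ∈ K) :
    Submodule.span ℝ {E 0 1, E 1 0, E 0 0 - E 1 1, E 1 1 + E 2 2} ≤ K.toSubmodule := by
  have mem_of_smul_mem {c : ℝ} {X} (hc : c ≠ 0) (h : c • X ∈ K) : X ∈ K :=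
    (K.toSubmodule.smul_mem_iff hc).mp h
  have hsym : E 0 1 + E 1 0 ∈ K := by
    refine mem_of_smul_mem (c := 4 * h₃ * (c₂₂ - c₁₁))
      (by simp [hh, sub_ne_zero.mpr hne.symm]) ?_
    rw [← lie_dissipator_hamiltonian]
    exact K.lie_mem hD hH
  have hskew : E 0 1 - E 1 0 ∈ K := mem_of_smul_mem (by simpa using hh) hH
  have h01 : E 0 1 ∈ K := by
    have : E 0 1 = (2 : ℝ)⁻¹ • ((E 0 1 + E 1 0) + (E 0 1 - E 1 0)) := by module
    exact this ▸ K.smul_mem _ (add_mem hsym hskew)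
  have h10 : E 1 0 ∈ K := by
    have : E 1 0 = (2 : ℝ)⁻¹ • ((E 0 1 + E 1 0) - (E 0 1 - E 1 0)) := by module
    exact this ▸ K.smul_mem _ (sub_mem hsym hskew)
  have hdiff : E 0 0 - E 1 1 ∈ K := lie_E_E_swap 0 1 ▸ K.lie_mem h01 h10
  have htrace : E 1 1 + E 2 2 ∈ K := by
    refine mem_of_smul_mem (c := 2 * (c₁₁ + c₂₂)) (by simpa using hsum) ?_
    rw [eq_sub_of_add_eq' (dissipator_eq c₁₁ c₂₂).symm]
    exact sub_mem hD (K.smul_mem _ hdiff)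
  rw [Submodule.span_le]
  rintro X (rfl | rfl | rfl | rfl)
  exacts [h01, h10, hdiff, htrace]

/-- With `H = 2h₃(E₁₂ − E₂₁)` and the completely positive dissipator
`D = 2(c₂₂E₁₁ + c₁₁E₂₂ + (c₁₁+c₂₂)E₃₃)` with `c₁₁ ≠ c₂₂`, the Lie algebra generated by
`{D, H + D}` is the 4-dimensional span of `{E₁₂, E₂₁, E₁₁ − E₂₂, E₂₂ + E₃₃}`;
in particular the control system is not accessible. -/
theorem stmt_14 (h₃ c₁₁ c₂₂ : ℝ) (hh : h₃ ≠ 0)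
    (h11 : 0 ≤ c₁₁) (h22 : 0 ≤ c₂₂) (hne : c₁₁ ≠ c₂₂) :
    let H : Matrix (Fin 3) (Fin 3) ℝ := (2 * h₃) • (E 0 1 - E 1 0)
    let D : Matrix (Fin 3) (Fin 3) ℝ :=
      2 • (c₂₂ • E 0 0 + c₁₁ • E 1 1 + (c₁₁ + c₂₂) • E 2 2)
    (LieSubalgebra.lieSpan ℝ (Matrix (Fin 3) (Fin 3) ℝ) {D, H + D} :
        Set (Matrix (Fin 3) (Fin 3) ℝ)) =
      (Submodule.span ℝ {E 0 1, E 1 0, E 0 0 - E 1 1, E 1 1 + E 2 2} :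
        Submodule ℝ (Matrix (Fin 3) (Fin 3) ℝ)) ∧
    Module.finrank ℝ
      (Submodule.span ℝ ({E 0 1, E 1 0, E 0 0 - E 1 1, E 1 1 + E 2 2} :
        Set (Matrix (Fin 3) (Fin 3) ℝ))) = 4 := by
  intro H D
  have hsum : c₁₁ + c₂₂ ≠ 0 := fun h ↦ hne (by linarith)
  set K := LieSubalgebra.lieSpan ℝ (Matrix (Fin 3) (Fin 3) ℝ) {D, H + D}
  have hD : D ∈ K := LieSubalgebra.subset_lieSpan (by simp)
  have hHD : H + D ∈ K := LieSubalgebra.subset_lieSpan (by simp)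
  have hH : H ∈ K := by simpa using sub_mem hHD hD
  refine ⟨Set.Subset.antisymm ?_ (span_blockBasis_le hh hne hsum hD hH), finrank_span_blockBasis⟩
  rw [← coe_blockLieSubalgebra, SetLike.coe_subset_coe, LieSubalgebra.lieSpan_le]
  have hDmem := dissipator_mem_blockLieSubalgebra c₁₁ c₂₂
  rintro X (rfl | rfl)
  exacts [hDmem, add_mem (hamiltonian_mem_blockLieSubalgebra h₃) hDmem]
end

section
/- Let h₁ be any real number, let c₁₁, c₂₂, c₂₃ be any real numbers, set H = 2h₁(E₂₃ − E₃₂) and D = 2·[[c₂₂, 0, 0],[0, c₁₁, −c₂₃],[0, −c₂₃, c₁₁ + c₂₂]]. Then the Lie subalgebra of gl(3,ℝ) generated by {D, H + D} is contained in the 5-dimensional Lie subalgebra spanned by {E₁₁, E₂₂, E₃₃, E₂₃, E₃₂}; in particular it equals neither gl(3,ℝ) nor sl(3,ℝ), so the corresponding control system is not accessible for either positive or completely positive dissipation. -/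
/-!
Both `D` and `H` leave the coordinate line `ℝ e₁` and the plane `span {e₂, e₃}` invariant.
Matrices that are block diagonal for a decomposition of the index set form an associative
subalgebra, hence a Lie subalgebra, so the whole Lie algebra generated by `D` and `H + D` is
block diagonal. It therefore misses the traceless matrix `E₁₂`, which is `E 0 1` since `Fin 3`
counts from 0.
-/

open Matrix

attribute [local instance 100] LieRing.ofAssociativeRing

namespace Matrix

variable (R : Type*) {n β : Type*} [CommRing R] [Fintype n] [DecidableEq n]

def blockDiagSubalgebra (b : n → β) : Subalgebra R (Matrix n n R) where
  carrier := {M | ∀ i j, b i ≠ b j → M i j = 0}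
  mul_mem' {M N} hM hN i j hij := by
    rw [mul_apply]
    refine Finset.sum_eq_zero fun k _ => ?_
    by_cases hik : b i = b k
    · rw [hN k j (hik ▸ hij), mul_zero]
    · rw [hM i k hik, zero_mul]
  add_mem' hM hN i j hij := by rw [add_apply, hM i j hij, hN i j hij, add_zero]
  algebraMap_mem' r i j hij := by
    rw [algebraMap_eq_diagonal]
    exact diagonal_apply_ne _ fun h => hij (congrArg b h)

variable {R}

theorem blockDiagSubalgebra_le_span_single (b : n → β) :
    Subalgebra.toSubmodule (blockDiagSubalgebra R b) ≤
      Submodule.span R {M | ∃ i j, b i = b j ∧ single i j 1 = M} := by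
  intro M hM
  rw [matrix_eq_sum_single M]
  refine Submodule.sum_mem _ fun i _ => Submodule.sum_mem _ fun j _ => ?_
  by_cases hij : b i = b j
  · rw [← mul_one (M i j), ← smul_eq_mul, ← smul_single]
    exact Submodule.smul_mem _ _ (Submodule.subset_span ⟨i, j, hij, rfl⟩)
  · rw [hM i j hij, single_zero]
    exact Submodule.zero_mem _

end Matrix

/-- With `H = 2h₁(E₂₃ − E₃₂)` and `D = 2[[c₂₂,0,0],[0,c₁₁,−c₂₃],[0,−c₂₃,c₁₁+c₂₂]]`, the
Lie algebra generated by `{D, H + D}` is contained in the 5-dimensional Lie subalgebra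
spanned by `{E₁₁, E₂₂, E₃₃, E₂₃, E₃₂}`; in particular it is neither `gl(3,ℝ)` nor
`sl(3,ℝ)`, so the control system is not accessible, for positive as well as for
completely positive dissipation. -/
theorem stmt_16 (h₁ c₁₁ c₂₂ c₂₃ : ℝ) :
    let H : Matrix (Fin 3) (Fin 3) ℝ := (2 * h₁) • (E 1 2 - E 2 1)
    let D : Matrix (Fin 3) (Fin 3) ℝ :=
      2 • !![c₂₂, 0, 0; 0, c₁₁, -c₂₃; 0, -c₂₃, c₁₁ + c₂₂]
    (LieSubalgebra.lieSpan ℝ (Matrix (Fin 3) (Fin 3) ℝ) {D, H + D} :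
        Set (Matrix (Fin 3) (Fin 3) ℝ)) ⊆
      (Submodule.span ℝ {E 0 0, E 1 1, E 2 2, E 1 2, E 2 1} :
        Submodule ℝ (Matrix (Fin 3) (Fin 3) ℝ)) ∧
    LieSubalgebra.lieSpan ℝ (Matrix (Fin 3) (Fin 3) ℝ) {D, H + D} ≠ ⊤ ∧
    (LieSubalgebra.lieSpan ℝ (Matrix (Fin 3) (Fin 3) ℝ) {D, H + D} :
        Set (Matrix (Fin 3) (Fin 3) ℝ)) ≠
      {A : Matrix (Fin 3) (Fin 3) ℝ | A.trace = 0} := by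
  intro H D
  let B := lieSubalgebraOfSubalgebra ℝ _ (blockDiagSubalgebra ℝ fun i : Fin 3 => i = 0)
  have hle : LieSubalgebra.lieSpan ℝ _ {D, H + D} ≤ B := by
    refine LieSubalgebra.lieSpan_le.mpr ?_
    rintro _ (rfl | rfl) i j hij <;> fin_cases i <;> fin_cases j <;> simp_all [H, D, E]
  have hE01 : E 0 1 ∉ B := fun h => by simpa [E] using h 0 1 (by simp)
  refine ⟨fun M hM => ?_, fun h => hE01 (hle (h ▸ LieSubalgebra.mem_top _)), fun h => ?_⟩
  · refine Submodule.span_mono ?_ (blockDiagSubalgebra_le_span_single _ (hle hM))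
    rintro _ ⟨i, j, hij, rfl⟩
    fin_cases i <;> fin_cases j <;> simp_all [E]
  · refine hE01 (hle (?_ : E 0 1 ∈ (LieSubalgebra.lieSpan ℝ _ {D, H + D} : Set _)))
    rw [h]
    simp [E, trace_single_eq_of_ne]
end

section
/- Let B₃ ≠ 0 and c₁₃ ≠ 0 be real numbers and let c₁₁, c₃₃ ≥ 0 satisfy c₁₁c₃₃ ≥ c₁₃² (so the coefficient matrix C = [[c₁₁,0,c₁₃],[0,0,0],[c₁₃,0,c₃₃]] is positive semidefinite and the dynamics is completely positive). Set H = 2B₃(E₁₂ − E₂₁) and D = 2·[[c₃₃, 0, −c₁₃],[0, c₁₁ + c₃₃, 0],[−c₁₃, 0, c₁₁]]. Then the Lie subalgebra of gl(3,ℝ) generated by {D, H + D} equals all of gl(3,ℝ); in particular the spin in a stochastic magnetic field with white-noise correlations W₁₁δ(t), W₁₃δ(t) is accessible even under the constraint of complete positivity. -/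
/-!
Write `A = E 0 1 - E 1 0`, so that `H = 2B₃ A`, and `Sᵢⱼ = E i j + E j i`. Then
`⁅A, D⁆ = 2 (c₁₁ S₀₁ + c₁₃ S₁₂)`, and `ad² A` acts by `-4` on `S₀₁` but by `-1` on `S₁₂`, so
both `S₀₁` and `S₁₂` lie in the generated algebra (here `c₁₃ ≠ 0`, and `c₁₁ ≠ 0` because
`c₁₁ c₃₃ ≥ c₁₃² > 0`). Together with `A` they give `E 0 1` and `E 1 0`, and brackets produce every
off-diagonal `E i j`, hence all of `sl(3)`. Since `trace D = 4 (c₁₁ + c₃₃) ≠ 0`, the algebra is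
all of `gl(3)`.
-/

open Matrix

attribute [local instance 100] LieRing.ofAssociativeRing

section GeneralLinear

variable {n R : Type*} [Fintype n] [DecidableEq n]

theorem Matrix.lie_single_single_one [CommRing R] (i j : n) :
    ⁅single i j (1 : R), single j i 1⁆ = (single i i 1 - single j j 1 : Matrix n n R) := by
  simp [Ring.lie_def]

open LieAlgebra.SpecialLinear in
theorem LieSubalgebra.sl_le_of_single_mem [CommRing R] {L : LieSubalgebra R (Matrix n n R)}
    (h : ∀ i j, i ≠ j → single i j (1 : R) ∈ L) : sl n R ≤ L := by
  intro X (hX : X.trace = 0)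
  have hdiag : ∀ i k, single i i (1 : R) - single k k 1 ∈ L := by
    intro i k
    rcases eq_or_ne i k with rfl | hik
    · simp
    · rw [← Matrix.lie_single_single_one]
      exact L.lie_mem (h i k hik) (h k i hik.symm)
  rcases isEmpty_or_nonempty n with _ | ⟨⟨k⟩⟩
  · simp [Subsingleton.elim X 0]
  -- as `trace X = 0`, the diagonal part of `X` is `∑ i, X i i • (single i i 1 - single k k 1)`
  have hsum : X = ∑ i, ∑ j, X i j • (single i j 1 - if i = j then single k k 1 else 0) := by
    calc X = X - X.trace • single k k 1 := by simp [hX]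
      _ = _ := by
        simp only [smul_sub, Finset.sum_sub_distrib, smul_ite, smul_zero, Finset.sum_ite_eq,
          Finset.mem_univ, if_true, ← Finset.sum_smul]
        congr 1
        simp only [smul_single, smul_eq_mul, mul_one, ← matrix_eq_sum_single]
  rw [hsum]
  refine sum_mem fun i _ => sum_mem fun j _ => L.smul_mem _ ?_
  rcases eq_or_ne i j with rfl | hij
  · simpa using hdiag i k
  · simpa [hij] using h i j hij

open LieAlgebra.SpecialLinear in
theorem LieSubalgebra.eq_top_of_sl_le {K : Type*} [Field K] {L : LieSubalgebra K (Matrix n n K)}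
    (hsl : sl n K ≤ L) {M : Matrix n n K} (hM : M ∈ L) (htr : M.trace ≠ 0) : L = ⊤ := by
  refine eq_top_iff.mpr fun X _ => ?_
  have hX : X - (X.trace / M.trace) • M ∈ L :=
    hsl (show (X - (X.trace / M.trace) • M).trace = 0 by simp [htr])
  simpa using L.add_mem hX (L.smul_mem (X.trace / M.trace) hM)

end GeneralLinear

section Spin

/-- The matrix `D` of the theorem. -/
noncomputable def relaxationMatrix (c₁₁ c₃₃ c₁₃ : ℝ) : Matrix (Fin 3) (Fin 3) ℝ :=
  2 • !![c₃₃, 0, -c₁₃; 0, c₁₁ + c₃₃, 0; -c₁₃, 0, c₁₁]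

theorem trace_relaxationMatrix (c₁₁ c₃₃ c₁₃ : ℝ) :
    (relaxationMatrix c₁₁ c₃₃ c₁₃).trace = 4 * (c₁₁ + c₃₃) := by
  simp [relaxationMatrix, trace, Fin.sum_univ_three]
  ring

theorem lie_rotation_relaxationMatrix (c₁₁ c₃₃ c₁₃ : ℝ) :
    ⁅E 0 1 - E 1 0, relaxationMatrix c₁₁ c₃₃ c₁₃⁆ =
      (2 * c₁₁) • (E 0 1 + E 1 0) + (2 * c₁₃) • (E 1 2 + E 2 1) := by
  ext a b
  fin_cases a <;> fin_cases b <;>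
    simp [relaxationMatrix, E, Ring.lie_def, mul_apply, single_apply, vecMul, dotProduct]

theorem lie_rotation_lie_rotation_sym (a b : ℝ) :
    ⁅E 0 1 - E 1 0, ⁅E 0 1 - E 1 0, a • (E 0 1 + E 1 0) + b • (E 1 2 + E 2 1)⁆⁆ =
      (-4 * a) • (E 0 1 + E 1 0) + (-b) • (E 1 2 + E 2 1) := by
  ext i j
  fin_cases i <;> fin_cases j <;> simp [E, Ring.lie_def, mul_apply, single_apply] <;> ring

theorem lie_sym₁₂_E₁₀ : ⁅E 1 2 + E 2 1, E 1 0⁆ = E 2 0 := by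
  ext a b
  fin_cases a <;> fin_cases b <;> simp [E, Ring.lie_def, mul_apply, single_apply]

variable {L : LieSubalgebra ℝ (Matrix (Fin 3) (Fin 3) ℝ)}

theorem sym_mem_of_rotation_mem {c₁₁ c₃₃ c₁₃ : ℝ} (h₁₁ : c₁₁ ≠ 0) (h₁₃ : c₁₃ ≠ 0)
    (hA : E 0 1 - E 1 0 ∈ L) (hD : relaxationMatrix c₁₁ c₃₃ c₁₃ ∈ L) :
    E 0 1 + E 1 0 ∈ L ∧ E 1 2 + E 2 1 ∈ L := by
  have hX : c₁₁ • (E 0 1 + E 1 0) + c₁₃ • (E 1 2 + E 2 1) ∈ L := by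
    have e : (2 : ℝ)⁻¹ • ⁅E 0 1 - E 1 0, relaxationMatrix c₁₁ c₃₃ c₁₃⁆ =
        c₁₁ • (E 0 1 + E 1 0) + c₁₃ • (E 1 2 + E 2 1) := by
      rw [lie_rotation_relaxationMatrix]
      module
    exact e ▸ L.smul_mem _ (L.lie_mem hA hD)
  have hadX := L.lie_mem hA (L.lie_mem hA hX)
  rw [lie_rotation_lie_rotation_sym] at hadX
  have hS₁₂ : E 1 2 + E 2 1 ∈ L := by
    have e : (4 : ℝ) • (c₁₁ • (E 0 1 + E 1 0) + c₁₃ • (E 1 2 + E 2 1)) +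
        ((-4 * c₁₁) • (E 0 1 + E 1 0) + (-c₁₃) • (E 1 2 + E 2 1)) =
        (3 * c₁₃) • (E 1 2 + E 2 1) := by
      module
    refine (L.toSubmodule.smul_mem_iff (mul_ne_zero three_ne_zero h₁₃)).mp ?_
    exact e ▸ L.add_mem (L.smul_mem _ hX) hadX
  refine ⟨(L.toSubmodule.smul_mem_iff h₁₁).mp ?_, hS₁₂⟩
  have e : c₁₁ • (E 0 1 + E 1 0) + c₁₃ • (E 1 2 + E 2 1) - c₁₃ • (E 1 2 + E 2 1) =
      c₁₁ • (E 0 1 + E 1 0) := by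
    module
  exact e ▸ L.sub_mem hX (L.smul_mem _ hS₁₂)

theorem E_mem_of_ne (h₀₁ : E 0 1 ∈ L) (h₁₀ : E 1 0 ∈ L) (hS : E 1 2 + E 2 1 ∈ L) :
    ∀ i j, i ≠ j → E i j ∈ L := by
  have h₂₀ : E 2 0 ∈ L := lie_sym₁₂_E₁₀ ▸ L.lie_mem hS h₁₀
  have h₂₁ : E 2 1 ∈ L := by
    have e : ⁅E 2 0, E 0 1⁆ = E 2 1 := by simp [E, Ring.lie_def]
    exact e ▸ L.lie_mem h₂₀ h₀₁
  have h₁₂ : E 1 2 ∈ L := by simpa using L.sub_mem hS h₂₁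
  have h₀₂ : E 0 2 ∈ L := by
    have e : ⁅E 0 1, E 1 2⁆ = E 0 2 := by simp [E, Ring.lie_def]
    exact e ▸ L.lie_mem h₀₁ h₁₂
  intro i j hij
  fin_cases i <;> fin_cases j <;> first | exact absurd rfl hij | assumption

end Spin

theorem stmt_17_general (B₃ c₁₁ c₃₃ c₁₃ : ℝ) (hB : B₃ ≠ 0) (h13 : c₁₃ ≠ 0)
    (hdet : c₁₃ ^ 2 ≤ c₁₁ * c₃₃) :
    let H : Matrix (Fin 3) (Fin 3) ℝ := (2 * B₃) • (E 0 1 - E 1 0)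
    let D : Matrix (Fin 3) (Fin 3) ℝ :=
      2 • !![c₃₃, 0, -c₁₃; 0, c₁₁ + c₃₃, 0; -c₁₃, 0, c₁₁]
    LieSubalgebra.lieSpan ℝ (Matrix (Fin 3) (Fin 3) ℝ) {D, H + D} = ⊤ := by
  intro H D
  set L := LieSubalgebra.lieSpan ℝ (Matrix (Fin 3) (Fin 3) ℝ) {D, H + D}
  have hprod : 0 < c₁₁ * c₃₃ := (by positivity : 0 < c₁₃ ^ 2).trans_le hdet
  have h₁₁ : c₁₁ ≠ 0 := left_ne_zero_of_mul hprod.ne'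
  have htr : (relaxationMatrix c₁₁ c₃₃ c₁₃).trace ≠ 0 := by
    rw [trace_relaxationMatrix]
    intro h
    nlinarith [sq_nonneg (c₁₁ - c₃₃)]
  have hD : D ∈ L := LieSubalgebra.subset_lieSpan (by simp)
  have hH : H ∈ L := by
    simpa using L.sub_mem (LieSubalgebra.subset_lieSpan (by simp) : H + D ∈ L) hD
  have hA : E 0 1 - E 1 0 ∈ L :=
    (L.toSubmodule.smul_mem_iff (mul_ne_zero two_ne_zero hB)).mp hH
  obtain ⟨hS₀₁, hS₁₂⟩ := sym_mem_of_rotation_mem h₁₁ h13 hA hD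
  have h₀₁ : E 0 1 ∈ L := by
    refine (L.toSubmodule.smul_mem_iff (two_ne_zero (α := ℝ))).mp ?_
    have e : E 0 1 + E 1 0 + (E 0 1 - E 1 0) = (2 : ℝ) • E 0 1 := by module
    exact e ▸ L.add_mem hS₀₁ hA
  have h₁₀ : E 1 0 ∈ L := by
    refine (L.toSubmodule.smul_mem_iff (two_ne_zero (α := ℝ))).mp ?_
    have e : E 0 1 + E 1 0 - (E 0 1 - E 1 0) = (2 : ℝ) • E 1 0 := by module
    exact e ▸ L.sub_mem hS₀₁ hA
  exact LieSubalgebra.eq_top_of_sl_le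
    (LieSubalgebra.sl_le_of_single_mem (E_mem_of_ne h₀₁ h₁₀ hS₁₂)) hD htr

/-- For the spin in a stochastic magnetic field with white-noise correlations:
with `B₃ ≠ 0`, `c₁₃ ≠ 0`, `c₁₁, c₃₃ ≥ 0`, `c₁₁c₃₃ ≥ c₁₃²` (so
`C = [[c₁₁,0,c₁₃],[0,0,0],[c₁₃,0,c₃₃]]` is positive semidefinite and the dynamics is
completely positive), `H = 2B₃(E₁₂ − E₂₁)` and
`D = 2[[c₃₃,0,−c₁₃],[0,c₁₁+c₃₃,0],[−c₁₃,0,c₁₁]]`, the Lie algebra generated by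
`{D, H + D}` is all of `gl(3,ℝ)`: the system is accessible even under complete
positivity. -/
theorem stmt_17 (B₃ c₁₁ c₃₃ c₁₃ : ℝ) (hB : B₃ ≠ 0) (h13 : c₁₃ ≠ 0)
    (h11 : 0 ≤ c₁₁) (h33 : 0 ≤ c₃₃) (hdet : c₁₃ ^ 2 ≤ c₁₁ * c₃₃) :
    let H : Matrix (Fin 3) (Fin 3) ℝ := (2 * B₃) • (E 0 1 - E 1 0)
    let D : Matrix (Fin 3) (Fin 3) ℝ :=
      2 • !![c₃₃, 0, -c₁₃; 0, c₁₁ + c₃₃, 0; -c₁₃, 0, c₁₁]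
    LieSubalgebra.lieSpan ℝ (Matrix (Fin 3) (Fin 3) ℝ) {D, H + D} = ⊤ :=
  stmt_17_general B₃ c₁₁ c₃₃ c₁₃ hB h13 hdet
end

section
/- Let 𝓗 = 2·[[0, B₃ + ω₃, ω₂],[−B₃ − ω₃, 0, ω₁],[−ω₂, −ω₁, 0]] and 𝓓 = 2·[[c₃₃, −c₁₂, −c₁₃],[−c₁₂, c₁₁ + c₃₃, −c₂₃],[−c₁₃, −c₂₃, c₁₁]] with all parameters real, set L = −(𝓗 + 𝓓), and suppose ω₂ + c₁₃ > 0. Let x(t) = exp(tL)·(1/2, 0, 0)ᵀ. Then x₃(0) = 0, the derivative of x₃ at t = 0 equals ω₂ + c₁₃ > 0, and consequently there exists t > 0 with x₃(t) > 0; that is, for the merely positive spin dynamics a state initially polarized along the positive x direction acquires a strictly positive z polarization ⟨S_z(t)⟩ at some time t. -/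
open Matrix

-- Matrices carry no norm by default; any choice works, it only serves to differentiate `exp`.
attribute [local instance] Matrix.linftyOpNormedRing Matrix.linftyOpNormedAlgebra

theorem Matrix.hasDerivAt_exp_smul_mulVec_apply {n : Type*} [Fintype n] [DecidableEq n]
    (L : Matrix n n ℝ) (v : n → ℝ) (i : n) (t : ℝ) :
    HasDerivAt (fun s : ℝ => (NormedSpace.exp (s • L) *ᵥ v) i)
      (((NormedSpace.exp (t • L) * L) *ᵥ v) i) t := by
  let evalMulVec : Matrix n n ℝ →L[ℝ] ℝ :=
    (LinearMap.proj i ∘ₗ (mulVecBilin ℝ ℝ).flip v).toContinuousLinearMap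
  exact evalMulVec.hasFDerivAt.comp_hasDerivAt t (hasDerivAt_exp_smul_const L t)

theorem HasDerivAt.exists_gt_of_deriv_pos {f : ℝ → ℝ} {f' a : ℝ} (hf : HasDerivAt f f' a)
    (hf' : 0 < f') : ∃ t, a < t ∧ f a < f t := by
  have hslope : ∀ᶠ t in nhdsWithin a (Set.Ioi a), 0 < slope f a t :=
    (hasDerivWithinAt_iff_tendsto_slope' Set.self_notMem_Ioi).mp hf.hasDerivWithinAt
      |>.eventually (eventually_gt_nhds hf')
  obtain ⟨t, hpos, hat⟩ := (hslope.and self_mem_nhdsWithin).exists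
  refine ⟨t, hat, ?_⟩
  rw [slope_def_field, div_pos_iff_of_pos_right (sub_pos.mpr hat)] at hpos
  exact sub_pos.mp hpos

/-- Merely positive spin dynamics: with
`𝓗 = 2[[0, B₃+ω₃, ω₂],[−B₃−ω₃, 0, ω₁],[−ω₂, −ω₁, 0]]`,
`𝓓 = 2[[c₃₃, −c₁₂, −c₁₃],[−c₁₂, c₁₁+c₃₃, −c₂₃],[−c₁₃, −c₂₃, c₁₁]]`, `L = −(𝓗 + 𝓓)` and
`ω₂ + c₁₃ > 0`, the trajectory `x(t) = exp(tL)·(1/2,0,0)ᵀ` satisfies `x₃(0) = 0`, its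
third component has derivative `ω₂ + c₁₃ > 0` at `t = 0`, and hence `x₃(t) > 0` for some
`t > 0`: the state initially polarized along `+x` acquires a strictly positive
`z` polarization `⟨S_z(t)⟩`. -/
theorem stmt_19 (B₃ ω₁ ω₂ ω₃ c₁₁ c₁₂ c₁₃ c₂₃ c₃₃ : ℝ) (hpos : 0 < ω₂ + c₁₃) :
    let 𝓗 : Matrix (Fin 3) (Fin 3) ℝ :=
      2 • !![0, B₃ + ω₃, ω₂; -B₃ - ω₃, 0, ω₁; -ω₂, -ω₁, 0]
    let 𝓓 : Matrix (Fin 3) (Fin 3) ℝ :=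
      2 • !![c₃₃, -c₁₂, -c₁₃; -c₁₂, c₁₁ + c₃₃, -c₂₃; -c₁₃, -c₂₃, c₁₁]
    let L : Matrix (Fin 3) (Fin 3) ℝ := -(𝓗 + 𝓓)
    let x : ℝ → Fin 3 → ℝ := fun t => (NormedSpace.exp (t • L)).mulVec ![1 / 2, 0, 0]
    x 0 2 = 0 ∧
    HasDerivAt (fun t => x t 2) (ω₂ + c₁₃) 0 ∧
    ∃ t : ℝ, 0 < t ∧ 0 < x t 2 := by
  intro 𝓗 𝓓 L x
  have hx₀ : x 0 2 = 0 := by simp [x]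
  have hLv : (L *ᵥ ![1 / 2, 0, 0]) 2 = ω₂ + c₁₃ := by
    simp [L, 𝓗, 𝓓, mulVec, dotProduct, Fin.sum_univ_three]
    ring
  have hderiv : HasDerivAt (fun t => x t 2) (ω₂ + c₁₃) 0 := by
    have := hasDerivAt_exp_smul_mulVec_apply L ![1 / 2, 0, 0] 2 0
    rwa [zero_smul, NormedSpace.exp_zero, one_mul, hLv] at this
  obtain ⟨t, ht, hxt⟩ := hderiv.exists_gt_of_deriv_pos hpos
  exact ⟨hx₀, hderiv, t, ht, hx₀ ▸ hxt⟩
end
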